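/- Let n be a squarefree positive integer all of whose prime factors are ≡ 1 (mod 4), and let b be an even integer with b² + 1 = λn² for some λ ∈ ℤ. For τ in the upper half-plane set σ(τ) = (2bτ − λ)/(4n²τ − 2b) (which again lies in the upper half-plane). Then for all τ in the upper half-plane: θ_{χ_n}(σ(τ)) = (1−i)·√(n²τ − b/2)·θ_{χ_n}(τ) if n ≡ 1 (mod 8), and θ_{χ_n}(σ(τ)) = (i−1)·√(n²τ − b/2)·θ_{χ_n}(τ) if n ≡ 5 (mod 8), where √ denotes the principal branch of the complex square root. -/

import Mathlib

open Complex

/-- `θ_{χ_n}(τ) = ∑_{k∈ℤ} (k|n) e^{2πik²τ}`. -/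
noncomputable def thetaChi (n : ℕ) (τ : ℂ) : ℂ :=
  ∑' k : ℤ, (jacobiSym k n : ℂ) * Complex.exp (2 * Real.pi * Complex.I * (k : ℂ) ^ 2 * τ)

lemma eq_of_sq_eq_sq_of_re_pos {z w : ℂ} (h : z ^ 2 = w ^ 2) (hz : 0 < z.re) (hw : 0 < w.re) :
    z = w := by
  have h2 : (z - w) * (z + w) = 0 := by linear_combination h
  rcases mul_eq_zero.mp h2 with h3 | h3
  · exact sub_eq_zero.mp h3
  · exfalso
    have : z = -w := by linear_combination h3
    have : z.re = -w.re := by rw [this]; simp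
    linarith

lemma re_cpow_half_pos {z : ℂ} (hz : 0 < z.re) : 0 < (z ^ (1/2 : ℂ)).re := by
  have hz0 : z ≠ 0 := by intro h; simp [h] at hz
  rw [Complex.cpow_def_of_ne_zero hz0, Complex.exp_re]
  have harg : |Complex.arg z| < Real.pi / 2 := by
    rw [Complex.abs_arg_lt_pi_div_two_iff]; exact Or.inl hz
  have him : (Complex.log z * (1/2 : ℂ)).im = Complex.arg z / 2 := by
    simp [Complex.log_im, Complex.mul_im, Complex.log_re]
    ring
  rw [him]
  have : Real.cos (Complex.arg z / 2) > 0 := by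
    apply Real.cos_pos_of_mem_Ioo
    constructor
    · nlinarith [abs_lt.mp harg, Real.pi_pos]
    · nlinarith [abs_lt.mp harg, Real.pi_pos]
  positivity

lemma sq_cpow_half {z : ℂ} (hz : z ≠ 0) : (z ^ (1/2 : ℂ)) ^ 2 = z := by
  rw [sq, ← Complex.cpow_add _ _ hz]
  norm_num

lemma re_add_im_cpow_half_pos {z : ℂ} (hz : 0 < z.im) : 0 < (z ^ (1/2 : ℂ)).re + (z ^ (1/2 : ℂ)).im := by
  have hz0 : z ≠ 0 := by intro h; simp [h] at hz
  rw [Complex.cpow_def_of_ne_zero hz0, Complex.exp_re, Complex.exp_im]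
  have him : (Complex.log z * (1/2 : ℂ)).im = Complex.arg z / 2 := by
    simp [Complex.log_im, Complex.mul_im, Complex.log_re]; ring
  rw [him]
  have h1 : 0 < Complex.arg z := by
    rcases lt_or_eq_of_le (Complex.arg_nonneg_iff.mpr hz.le) with h | h
    · exact h
    · exfalso
      have := Complex.arg_eq_zero_iff.mp h.symm
      linarith [this.2]
  have h2 : Complex.arg z < Real.pi := by
    rw [Complex.arg_lt_pi_iff]; exact Or.inr (ne_of_gt hz)
  have hc : 0 < Real.cos (Complex.arg z / 2) := by
    apply Real.cos_pos_of_mem_Ioo; constructor <;> [nlinarith [Real.pi_pos]; nlinarith]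
  have hs : 0 < Real.sin (Complex.arg z / 2) := by
    apply Real.sin_pos_of_pos_of_lt_pi <;> nlinarith [Real.pi_pos]
  have he : 0 < Real.exp (Complex.log z * (1/2 : ℂ)).re := Real.exp_pos _
  nlinarith

lemma scalar_identity {T : ℂ} (hT : 0 < T.im) (n : ℕ) (hn : 0 < n) :
    (n : ℂ) / (Complex.I * (n : ℂ)^2 / T) ^ (1/2 : ℂ) = (1 - Complex.I) * (T/2) ^ (1/2 : ℂ) := by
  have hT0 : T ≠ 0 := by intro h; simp [h] at hT
  have hn0 : (n : ℂ) ≠ 0 := Nat.cast_ne_zero.mpr hn.ne'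
  set z : ℂ := Complex.I * (n : ℂ)^2 / T with hzdef
  have hz0 : z ≠ 0 :=
    div_ne_zero (mul_ne_zero Complex.I_ne_zero (pow_ne_zero 2 hn0)) hT0
  have hzre : 0 < z.re := by
    have h4 : z.re = (n:ℝ)^2 * T.im / Complex.normSq T := by
      have e1 : ((n:ℂ)^2).im = 0 := by
        exact_mod_cast Complex.natCast_im (n^2)
      have e2 : ((n:ℂ)^2).re = (n:ℝ)^2 := by
        rw [show ((n:ℂ)^2) = ((n^2 : ℕ) : ℂ) by push_cast; ring, Complex.natCast_re]; push_cast; ring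
      rw [hzdef, Complex.div_re]
      simp only [Complex.mul_re, Complex.mul_im, Complex.I_re, Complex.I_im, e1, e2]
      ring
    rw [h4]
    exact div_pos (by positivity) (Complex.normSq_pos.mpr hT0)
  have hw : 0 < (z ^ (1/2:ℂ)).re := re_cpow_half_pos hzre
  have hw0 : z ^ (1/2:ℂ) ≠ 0 := by intro h; rw [h] at hw; simp at hw
  have hTim : 0 < (T/2).im := by
    have : (T/2 : ℂ).im = T.im / 2 := by
      rw [show (T/2 : ℂ) = T * (2⁻¹ : ℂ) by ring, Complex.mul_im]
      norm_num
      ring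
    rw [this]; linarith
  have hT20 : (T/2 : ℂ) ≠ 0 := by intro h; rw [h] at hTim; simp at hTim
  apply eq_of_sq_eq_sq_of_re_pos
  · rw [div_pow, sq_cpow_half hz0, mul_pow, sq_cpow_half hT20, div_eq_iff hz0, hzdef]
    field_simp
    ring_nf
    linear_combination (2 - Complex.I) * Complex.I_sq
  · rw [div_eq_mul_inv, Complex.mul_re]
    have h5 : ((n:ℂ)).im = 0 := by simp
    have h3 : ((n:ℂ)).re = (n:ℝ) := by simp
    rw [h5, h3, Complex.inv_re]
    have : 0 < Complex.normSq (z ^ (1/2:ℂ)) := Complex.normSq_pos.mpr hw0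
    have hnr : (0:ℝ) < (n:ℝ) := by exact_mod_cast hn
    simp only [zero_mul, sub_zero]
    positivity
  · have := re_add_im_cpow_half_pos hTim
    set m := (T/2 : ℂ) ^ (1/2:ℂ)
    rw [Complex.mul_re]
    simp only [Complex.sub_re, Complex.sub_im, Complex.one_re, Complex.one_im, Complex.I_re,
      Complex.I_im]
    linarith

def zmodIntEquiv (N : ℕ) [NeZero N] : ZMod N × ℤ ≃ ℤ where
  toFun p := (p.1.val : ℤ) + N * p.2
  invFun k := ((k : ZMod N), (k - ((k : ZMod N).val : ℤ)) / N)
  left_inv p := by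
    obtain ⟨r, j⟩ := p
    have h1 : (((r.val : ℤ) + N * j : ℤ) : ZMod N) = r := by
      push_cast
      simp [ZMod.natCast_val, ZMod.intCast_cast, ZMod.cast_id]
    simp only [h1]
    rw [Prod.mk.injEq]
    refine ⟨rfl, ?_⟩
    rw [add_sub_cancel_left]
    exact Int.mul_ediv_cancel_left j (by exact_mod_cast (NeZero.ne N))
  right_inv k := by
    simp only
    have h1 : ((k : ZMod N).val : ℤ) = k % N := ZMod.val_intCast k
    rw [h1]
    have hN : (0:ℤ) < N := by exact_mod_cast Nat.pos_of_ne_zero (NeZero.ne N)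
    have h2 : (N:ℤ) ∣ k - k % N := Int.dvd_self_sub_of_emod_eq rfl
    obtain ⟨c, hc⟩ := h2
    rw [hc, Int.mul_ediv_cancel_left c hN.ne']
    omega

lemma tsum_int_residue {f : ℤ → ℂ} (hf : Summable f) (N : ℕ) [NeZero N] :
    ∑' k : ℤ, f k = ∑ r : ZMod N, ∑' j : ℤ, f ((r.val : ℤ) + N * j) := by
  rw [← (zmodIntEquiv N).tsum_eq f]
  have hs : Summable (f ∘ (zmodIntEquiv N)) := hf.comp_injective (zmodIntEquiv N).injective
  rw [← tsum_fintype (L := SummationFilter.unconditional (ZMod N))]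
  exact Summable.tsum_prod' hs fun r => (hs.comp_injective (fun j j' h => by simpa using h : Function.Injective (Prod.mk r)))

lemma jacobi_prime_case (p : ℕ) (hp : p.Prime) (h4 : p % 4 = 1) (b : ℤ)
    (hd : (p:ℤ) ∣ b^2+1) :
    (p % 8 = 1 ∧ jacobiSym b p = 1) ∨ (p % 8 = 5 ∧ jacobiSym b p = -1) := by
  haveI : Fact p.Prime := ⟨hp⟩
  have hp2 : 2 < p := by
    rcases hp.two_le.lt_or_eq with h | h
    · exact h
    · omega
  haveI : Fact (2 < p) := ⟨hp2⟩
  have hb2 : (b : ZMod p)^2 = -1 := by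
    have : ((b^2+1 : ℤ) : ZMod p) = 0 := by
      rw [ZMod.intCast_zmod_eq_zero_iff_dvd]; exact_mod_cast hd
    push_cast at this
    linear_combination this
  set k := p / 4 with hk
  have hpk : p = 4*k+1 := by omega
  have euler : ((legendreSym p b : ZMod p)) = (b:ZMod p) ^ (p / 2) := legendreSym.eq_pow p b
  have hdiv : p / 2 = 2 * k := by omega
  have hpow : ((legendreSym p b : ZMod p)) = (-1 : ZMod p)^k := by
    rw [euler, hdiv, pow_mul, hb2]
  have htri := legendreSym.eq_zero_iff p b
  have hne : (-1 : ZMod p) ≠ 1 := ZMod.neg_one_ne_one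
  have hvals : legendreSym p b = 0 ∨ legendreSym p b = 1 ∨ legendreSym p b = -1 := by
    rw [jacobiSym.legendreSym.to_jacobiSym]; exact jacobiSym.trichotomy b p
  have hnz : legendreSym p b ≠ 0 := by
    intro h0
    have hb0 : (b : ZMod p) = 0 := htri.mp h0
    rw [hb0] at hb2
    have : (0 : ZMod p) = -1 := by rw [← hb2]; ring
    exact (neg_ne_zero.mpr (one_ne_zero)) this.symm
  rcases Nat.even_or_odd k with he | ho
  · left
    constructor
    · obtain ⟨t, ht⟩ := he; omega
    · rw [← jacobiSym.legendreSym.to_jacobiSym]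
      rcases hvals with h | h | h
      · exact absurd h hnz
      · exact h
      · exfalso
        rw [h] at hpow
        rw [he.neg_one_pow] at hpow
        push_cast at hpow
        exact hne hpow
  · right
    constructor
    · obtain ⟨t, ht⟩ := ho; omega
    · rw [← jacobiSym.legendreSym.to_jacobiSym]
      rcases hvals with h | h | h
      · exact absurd h hnz
      · exfalso
        rw [h, ho.neg_one_pow] at hpow
        push_cast at hpow
        exact hne hpow.symm
      · exact h

lemma jacobi_b_val (n : ℕ) (hn : 0 < n) (hsf : Squarefree n)
    (hp : ∀ p : ℕ, p.Prime → p ∣ n → p % 4 = 1) (b : ℤ) (hd : (n:ℤ) ∣ b^2+1) :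
    (n % 8 = 1 ∧ jacobiSym b n = 1) ∨ (n % 8 = 5 ∧ jacobiSym b n = -1) := by
  induction n using Nat.strong_induction_on with
  | _ n ih =>
    rcases eq_or_lt_of_le (Nat.one_le_iff_ne_zero.mpr hn.ne') with h1 | h1
    · left
      rw [← h1]
      exact ⟨rfl, jacobiSym.one_right b⟩
    · set p := n.minFac with hpdef
      have hpp : p.Prime := Nat.minFac_prime (by omega)
      have hpd : p ∣ n := Nat.minFac_dvd n
      set m := n / p with hmdef
      have hnm : n = p * m := (Nat.mul_div_cancel' hpd).symm
      have hm0 : 0 < m := Nat.div_pos (Nat.le_of_dvd hn hpd) hpp.pos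
      have hmlt : m < n := by
        have : 1 < p := hpp.one_lt
        calc m = n / p := rfl
        _ < n := Nat.div_lt_self hn this
      have hmd : m ∣ n := ⟨p, by rw [hnm]; ring⟩
      have hmsf : Squarefree m := Squarefree.squarefree_of_dvd hmd hsf
      have hmp : ∀ q : ℕ, q.Prime → q ∣ m → q % 4 = 1 := fun q hq hqd => hp q hq (hqd.trans hmd)
      have hmdvd : (m:ℤ) ∣ b^2+1 := dvd_trans (by exact_mod_cast Int.natCast_dvd_natCast.mpr hmd) hd
      have hpdvd : (p:ℤ) ∣ b^2+1 := dvd_trans (by exact_mod_cast Int.natCast_dvd_natCast.mpr hpd) hd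
      have hP := jacobi_prime_case p hpp (hp p hpp hpd) b hpdvd
      have hM := ih m hmlt hm0 hmsf hmp hmdvd
      haveI : NeZero p := ⟨hpp.pos.ne'⟩
      haveI : NeZero m := ⟨hm0.ne'⟩
      have hmul : jacobiSym b n = jacobiSym b p * jacobiSym b m := by
        rw [hnm]; exact jacobiSym.mul_right b p m
      have hn8 : n % 8 = (p % 8) * (m % 8) % 8 := by
        rw [hnm, Nat.mul_mod]
      rcases hP with ⟨hp8, hpj⟩ | ⟨hp8, hpj⟩ <;> rcases hM with ⟨hm8, hmj⟩ | ⟨hm8, hmj⟩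
      · left; exact ⟨by rw [hp8, hm8] at hn8; omega, by rw [hmul, hpj, hmj]; ring⟩
      · right; exact ⟨by rw [hp8, hm8] at hn8; omega, by rw [hmul, hpj, hmj]; ring⟩
      · right; exact ⟨by rw [hp8, hm8] at hn8; omega, by rw [hmul, hpj, hmj]; ring⟩
      · left; exact ⟨by rw [hp8, hm8] at hn8; omega, by rw [hmul, hpj, hmj]; ring⟩

open Real in
lemma exp_sum_aux (n : ℕ) (hn : 0 < n) (a : ℤ) :
    ∑ y ∈ Finset.range n, Complex.exp (2 * π * I * a * y / n) =
      if (n:ℤ) ∣ a then (n:ℂ) else 0 := by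
  have key : ∀ y : ℕ, Complex.exp (2 * π * I * a * y / n) =
      (Complex.exp (2 * π * I * a / n)) ^ y := by
    intro y
    rw [← Complex.exp_nat_mul]
    congr 1
    ring
  simp_rw [key]
  by_cases h : (n:ℤ) ∣ a
  · obtain ⟨c, hc⟩ := h
    have : Complex.exp (2 * π * I * a / n) = 1 := by
      rw [Complex.exp_eq_one_iff]
      have hn0 : (n:ℂ) ≠ 0 := Nat.cast_ne_zero.mpr hn.ne'
      refine ⟨c, ?_⟩
      rw [hc]
      push_cast
      field_simp
    simp only [this, one_pow, Finset.sum_const, Finset.card_range, nsmul_eq_mul, mul_one]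
    rw [if_pos ⟨c, hc⟩]
  · rw [if_neg h]
    have hω : Complex.exp (2 * π * I * a / n) ≠ 1 := by
      intro hc
      rw [Complex.exp_eq_one_iff] at hc
      obtain ⟨k, hk⟩ := hc
      apply h
      refine ⟨k, ?_⟩
      have hπ : (π : ℂ) ≠ 0 := by exact_mod_cast Real.pi_ne_zero
      have hn0 : (n:ℂ) ≠ 0 := Nat.cast_ne_zero.mpr hn.ne'
      have : (a : ℂ) = (n:ℂ) * k := by
        field_simp at hk
        have h2 : (2:ℂ) * π * I * a = k * (2*π*I) * n := by linear_combination (2*π*I) * hk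
        have hI : (2:ℂ) * π * I ≠ 0 := by
          simp [Complex.I_ne_zero, hπ]
        have h3 : (a:ℂ) * (2*π*I) = ((n:ℂ)*k) * (2*π*I) := by linear_combination h2
        exact mul_right_cancel₀ hI h3
      exact_mod_cast this
    rw [geom_sum_eq hω]
    have : Complex.exp (2 * π * I * a / n) ^ n = 1 := by
      rw [← Complex.exp_nat_mul, Complex.exp_eq_one_iff]
      refine ⟨a, ?_⟩
      have hn0 : (n:ℂ) ≠ 0 := Nat.cast_ne_zero.mpr hn.ne'
      field_simp
    rw [this]
    simp

open Real in
lemma Hsum (n : ℕ) (hn : 0 < n) (N : ℕ) [NeZero N] (hN : N = n^2)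
    (b : ℤ) (hb : Even b) (hcop : IsCoprime b (n:ℤ)) (s : ℤ) :
    ∑ r : ZMod N, (jacobiSym ((r.val :ℤ) + s) n : ℂ) *
      Complex.exp (π * I * b * (r.val:ℂ)^2 / (n:ℂ)^2) = n * (jacobiSym s n : ℂ) := by
  have hn0 : (n:ℂ) ≠ 0 := Nat.cast_ne_zero.mpr hn.ne'
  set g : ℕ → ℂ := fun v => (jacobiSym ((v:ℤ) + s) n : ℂ) *
      Complex.exp (π * I * b * (v:ℂ)^2 / (n:ℂ)^2) with hg
  have step1 : ∑ r : ZMod N, g r.val = ∑ i ∈ Finset.range N, g i := by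
    apply Finset.sum_bij' (fun (r : ZMod N) _ => r.val) (fun (i : ℕ) _ => (i : ZMod N))
    · intro a _; exact Finset.mem_range.mpr (ZMod.val_lt a)
    · intro a _; exact Finset.mem_univ _
    · intro a _; exact ZMod.natCast_rightInverse a
    · intro i hi; exact ZMod.val_natCast_of_lt (Finset.mem_range.mp hi)
    · intro a _; rfl
  rw [step1, hN]
  -- split into double sum
  have step2 : ∑ i ∈ Finset.range (n^2), g i =
      ∑ p ∈ Finset.range n ×ˢ Finset.range n, g (p.1 + n * p.2) := by
    apply Finset.sum_bij' (fun (i : ℕ) _ => ((i % n, i / n) : ℕ × ℕ))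
      (fun (p : ℕ × ℕ) _ => p.1 + n * p.2)
    · intro i hi
      have hi' := Finset.mem_range.mp hi
      refine Finset.mem_product.mpr ⟨Finset.mem_range.mpr (Nat.mod_lt _ hn), Finset.mem_range.mpr ?_⟩
      have : i < n * n := by nlinarith [sq_nonneg n]; 
      exact Nat.div_lt_of_lt_mul (by nlinarith [Finset.mem_range.mp hi])
    · intro p hp
      obtain ⟨h1, h2⟩ := Finset.mem_product.mp hp
      have h1' := Finset.mem_range.mp h1
      have h2' := Finset.mem_range.mp h2
      refine Finset.mem_range.mpr ?_
      have : p.1 + n * p.2 < n + n * (n-1) := by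
        have : p.2 ≤ n - 1 := by omega
        nlinarith
      nlinarith [sq_nonneg n]
    · intro i _; exact Nat.mod_add_div i n
    · intro p hp
      obtain ⟨h1, h2⟩ := Finset.mem_product.mp hp
      have h1' := Finset.mem_range.mp h1
      have h2' := Finset.mem_range.mp h2
      have e1 : (p.1 + n * p.2) % n = p.1 := by
        rw [Nat.add_mul_mod_self_left, Nat.mod_eq_of_lt h1']
      have e2 : (p.1 + n * p.2) / n = p.2 := by
        rw [Nat.add_mul_div_left _ _ hn, Nat.div_eq_of_lt h1', zero_add]
      exact Prod.ext e1 e2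
    · intro i _
      exact (congrArg g (Nat.mod_add_div i n)).symm
  rw [step2, Finset.sum_product]
  obtain ⟨c, hc⟩ := hb
  have inner : ∀ x ∈ Finset.range n, ∀ y ∈ Finset.range n,
      g (x + n * y) = (jacobiSym ((x:ℤ) + s) n : ℂ) * Complex.exp (π * I * b * (x:ℂ)^2 / (n:ℂ)^2)
        * Complex.exp (2 * π * I * ((b * (x:ℤ) : ℤ) : ℂ) * y / n) := by
    intro x _ y _
    rw [hg]
    simp only
    have hj : jacobiSym (((x + n*y : ℕ):ℤ) + s) n = jacobiSym ((x:ℤ) + s) n := by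
      apply jacobiSym.mod_left'
      push_cast
      rw [show (x:ℤ) + (n:ℤ)*(y:ℤ) + s = ((x:ℤ) + s) + (n:ℤ)*(y:ℤ) from by ring,
        Int.add_mul_emod_self_left]
    rw [hj]
    have he : (π : ℂ) * I * b * ((x + n*y : ℕ):ℂ)^2 / (n:ℂ)^2 =
        π * I * b * (x:ℂ)^2 / (n:ℂ)^2 + 2 * π * I * ((b * (x:ℤ) : ℤ) : ℂ) * y / n
        + ((c * y^2 : ℤ) : ℂ) * (2 * π * I) := by
      push_cast [hc]
      field_simp
      ring
    rw [he, Complex.exp_add, Complex.exp_add]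
    rw [show ((c * y^2 : ℤ) : ℂ) * (2 * π * I) = (c * y^2 : ℤ) * (2 * π * I) from rfl,
      Complex.exp_int_mul_two_pi_mul_I]
    ring
  calc ∑ x ∈ Finset.range n, ∑ y ∈ Finset.range n, g (x + n * y)
      = ∑ x ∈ Finset.range n, (jacobiSym ((x:ℤ) + s) n : ℂ) *
          Complex.exp (π * I * b * (x:ℂ)^2 / (n:ℂ)^2) *
          (if (n:ℤ) ∣ b * (x:ℤ) then (n:ℂ) else 0) := by
        apply Finset.sum_congr rfl
        intro x hx
        rw [Finset.sum_congr rfl (inner x hx), ← Finset.mul_sum, exp_sum_aux n hn (b * (x:ℤ))]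
    _ = n * (jacobiSym s n : ℂ) := by
        rw [Finset.sum_eq_single 0]
        · simp [mul_comm]
        · intro x hx hx0
          have hxlt := Finset.mem_range.mp hx
          have hnd : ¬ ((n:ℤ) ∣ b * (x:ℤ)) := by
            intro hdvd
            have hdx : (n:ℤ) ∣ (x:ℤ) := (IsCoprime.symm hcop).dvd_of_dvd_mul_left hdvd
            have : (n:ℤ) ≤ (x:ℤ) := Int.le_of_dvd (by exact_mod_cast Nat.pos_of_ne_zero hx0) hdx
            omega
          rw [if_neg hnd, mul_zero]
        · intro h
          exact absurd (Finset.mem_range.mpr hn) h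

open Real in
lemma Ssum (n : ℕ) (hn : 0 < n) (N : ℕ) [NeZero N] (hN : N = n^2) (b : ℤ) (hb : Even b)
    (lam : ℤ) (hlam : b^2 + 1 = lam * (n:ℤ)^2) (l : ℤ) :
    ∑ r : ZMod N, (jacobiSym (r.val:ℤ) n : ℂ) *
      Complex.exp (π * I * ((b:ℂ) * ((r.val:ℕ):ℂ)^2 + 2 * (l:ℂ) * ((r.val:ℕ):ℂ)) / (N:ℂ)) =
    Complex.exp (π * I * (b:ℂ) * (l:ℂ)^2 / (N:ℂ)) * n * (jacobiSym b n : ℂ) *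
      (jacobiSym l n : ℂ) := by
  obtain ⟨c, hc⟩ := hb
  have hbc : b = 2 * c := by omega
  have hbcC : (b:ℂ) = 2 * (c:ℂ) := by exact_mod_cast congrArg (fun x : ℤ => (x:ℂ)) hbc
  have hn0 : (n:ℂ) ≠ 0 := Nat.cast_ne_zero.mpr hn.ne'
  have hN0 : (N:ℂ) ≠ 0 := by rw [hN]; push_cast; exact pow_ne_zero 2 hn0
  have hcn : (b:ℂ)^2 + 1 = (lam:ℂ) * (N:ℂ) := by
    rw [hN]
    exact_mod_cast congrArg (fun x : ℤ => (x:ℂ)) hlam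
  have hcop : IsCoprime b (n:ℤ) := by
    refine ⟨-b, lam * n, ?_⟩
    linear_combination -hlam
  set G : ℤ → ℂ := fun v => (jacobiSym v n : ℂ) *
      Complex.exp (π * I * ((b:ℂ) * (v:ℂ)^2 + 2 * (l:ℂ) * (v:ℂ)) / (N:ℂ)) with hG
  have hdvdnN : (n:ℤ) ∣ (N:ℤ) := by rw [hN]; push_cast; exact Dvd.intro n (by ring)
  have Gper : ∀ v t : ℤ, G (v + N * t) = G v := by
    intro v t
    rw [hG]
    simp only
    obtain ⟨u, hu⟩ := hdvdnN
    congr 1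
    · congr 1
      apply jacobiSym.mod_left'
      rw [hu, show v + (n:ℤ) * u * t = v + (n:ℤ) * (u * t) from by ring,
        Int.add_mul_emod_self_left]
    · rw [Complex.exp_eq_exp_iff_exists_int]
      refine ⟨b*v*t + c*N*t^2 + l*t, ?_⟩
      push_cast [hbc]
      field_simp
      ring
  have Gcong : ∀ v w : ℤ, v % N = w % N → G v = G w := by
    intro v w h
    have hdvd : (N:ℤ) ∣ (w - v) :=
      Int.dvd_of_emod_eq_zero (Int.emod_emod_of_dvd _ (dvd_refl _) ▸
        (Int.emod_eq_emod_iff_emod_sub_eq_zero.mp h.symm))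
    obtain ⟨t, ht⟩ := hdvd
    have hw : w = v + N * t := by linarith
    rw [hw, Gper]
  set cc : ZMod N := ((l * b : ℤ) : ZMod N) with hcc
  have reindex : ∑ r : ZMod N, G (r.val:ℤ) = ∑ r : ZMod N, G ((r + cc).val : ℤ) :=
    (Equiv.sum_comp (Equiv.addRight cc) (fun x => G (x.val:ℤ))).symm
  have shift : ∀ r : ZMod N, G ((r + cc).val : ℤ) = G ((r.val:ℤ) + l * b) := by
    intro r
    apply Gcong
    have h1 : (((r.val:ℤ) + l * b : ℤ) : ZMod N) = r + cc := by
      push_cast [hcc]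
      simp [ZMod.natCast_val, ZMod.cast_id]
    have h2 : (((r + cc).val : ℤ)) = ((r.val:ℤ) + l * b) % N := by
      rw [← h1, ZMod.val_intCast]
    rw [h2, Int.emod_emod_of_dvd _ (dvd_refl _)]
  have sq_complete : ∀ r : ZMod N, G ((r.val:ℤ) + l * b) =
      Complex.exp (π * I * (b:ℂ) * (l:ℂ)^2 / (N:ℂ)) *
        ((jacobiSym ((r.val:ℤ) + l * b) n : ℂ) *
          Complex.exp (π * I * b * ((r.val:ℕ):ℂ)^2 / (n:ℂ)^2)) := by
    intro r
    rw [hG]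
    simp only
    set v : ℂ := ((r.val:ℕ):ℂ) with hv
    have hcast : (((r.val:ℤ) + l * b : ℤ) : ℂ) = v + (l:ℂ) * (b:ℂ) := by push_cast; ring
    rw [hcast]
    set mZ : ℤ := lam * l * ((r.val:ℤ) + c*l) with hmZ
    have key : (b:ℂ) * (v + (l:ℂ)*(b:ℂ))^2 + 2*(l:ℂ)*(v + (l:ℂ)*(b:ℂ)) =
        ((b:ℂ) * v^2 + (b:ℂ) * (l:ℂ)^2) + (N:ℂ) * (2 * (mZ:ℂ)) := by
      have hmC : (mZ:ℂ) = (lam:ℂ) * (l:ℂ) * (v + (c:ℂ)*(l:ℂ)) := by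
        rw [hmZ]; push_cast; ring
      rw [hmC]
      linear_combination (2*(l:ℂ)*v + (b:ℂ)*(l:ℂ)^2) * hcn + ((lam:ℂ)*(N:ℂ)*(l:ℂ)^2) * hbcC
    rw [key]
    have split : (π:ℂ) * I * (((b:ℂ) * v^2 + (b:ℂ) * (l:ℂ)^2) + (N:ℂ) * (2 * (mZ:ℂ))) / (N:ℂ) =
        π * I * (b:ℂ) * (l:ℂ)^2 / (N:ℂ) + π * I * (b:ℂ) * v^2 / ((n:ℂ)^2) + (mZ:ℂ) * (2 * π * I) := by
      rw [hN]
      push_cast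
      field_simp
      ring
    rw [split, Complex.exp_add, Complex.exp_add, Complex.exp_int_mul_two_pi_mul_I, mul_one]
    ring
  have lhs_eq : ∑ r : ZMod N, (jacobiSym (r.val:ℤ) n : ℂ) *
      Complex.exp (π * I * ((b:ℂ) * ((r.val:ℕ):ℂ)^2 + 2 * (l:ℂ) * ((r.val:ℕ):ℂ)) / (N:ℂ)) =
      ∑ r : ZMod N, G (r.val:ℤ) := by
    apply Finset.sum_congr rfl
    intro r _
    rw [hG]
    simp only
    norm_cast
  rw [lhs_eq, reindex]
  rw [Finset.sum_congr rfl (fun r _ => (shift r).trans (sq_complete r))]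
  rw [← Finset.mul_sum]
  have := Hsum n hn N hN b ⟨c, hc⟩ hcop (l * b)
  have conv : ∑ r : ZMod N, (jacobiSym ((r.val:ℤ) + l * b) n : ℂ) *
      Complex.exp (π * I * b * ((r.val:ℕ):ℂ)^2 / (n:ℂ)^2) = (n:ℂ) * (jacobiSym (l*b) n : ℂ) := this
  rw [conv, jacobiSym.mul_left]
  push_cast
  ring

open Real in
lemma thetaChi_key (n : ℕ) (hn : 0 < n) (b : ℤ) (hb : Even b) (lam : ℤ)
    (hlam : b ^ 2 + 1 = lam * (n : ℤ) ^ 2) (τ : ℂ) (hτ : 0 < τ.im) :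
    thetaChi n ((2 * (b : ℂ) * τ - (lam : ℂ)) / (4 * (n : ℂ) ^ 2 * τ - 2 * (b : ℂ))) =
      (jacobiSym b n : ℂ) * ((1 - Complex.I) * (((n : ℂ) ^ 2 * τ - (b : ℂ) / 2) ^ ((1 : ℂ) / 2)))
        * thetaChi n τ := by
  obtain ⟨c, hc⟩ := hb
  have hbc : b = 2 * c := by omega
  set N : ℕ := n ^ 2 with hNdef
  haveI : NeZero N := ⟨pow_ne_zero 2 hn.ne'⟩
  have hn0 : (n:ℂ) ≠ 0 := Nat.cast_ne_zero.mpr hn.ne'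
  have hNC : (N:ℂ) = (n:ℂ)^2 := by rw [hNdef]; push_cast; ring
  have hN0 : (N:ℂ) ≠ 0 := by rw [hNC]; exact pow_ne_zero 2 hn0
  have hNR0 : (N:ℝ) ≠ 0 := Nat.cast_ne_zero.mpr (NeZero.ne N)
  set T : ℂ := 2 * (n:ℂ)^2 * τ - b with hTdef
  have hTim : 0 < T.im := by
    have hTalt : T = ((2*(n:ℝ)^2 : ℝ):ℂ) * τ - (((b:ℝ)):ℂ) := by rw [hTdef]; push_cast; ring
    have h1 : T.im = 2*(n:ℝ)^2 * τ.im := by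
      rw [hTalt, Complex.sub_im, Complex.im_ofReal_mul, Complex.ofReal_im, sub_zero]
    rw [h1]
    positivity
  have hT0 : T ≠ 0 := by intro h; rw [h] at hTim; simp at hTim
  have hnormT : 0 < Complex.normSq T := Complex.normSq_pos.mpr hT0
  set S : ℂ := (2 * (b : ℂ) * τ - (lam : ℂ)) / (4 * (n : ℂ) ^ 2 * τ - 2 * (b : ℂ)) with hSdef
  have hden : 4 * (n : ℂ) ^ 2 * τ - 2 * (b : ℂ) = 2 * T := by rw [hTdef]; ring
  have h2T0 : (2:ℂ) * T ≠ 0 := mul_ne_zero two_ne_zero hT0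
  have h2NT0 : 2 * (N:ℂ) * T ≠ 0 := mul_ne_zero (mul_ne_zero two_ne_zero hN0) hT0
  have hlamC : (b:ℂ)^2 + 1 = (lam:ℂ) * (n:ℂ)^2 := by
    exact_mod_cast congrArg (fun x : ℤ => (x:ℂ)) hlam
  have hσ : S = (b:ℂ)/(2*(N:ℂ)) - 1/(2*(N:ℂ)*T) := by
    have hR : (b:ℂ)/(2*(N:ℂ)) - 1/(2*(N:ℂ)*T) = ((b:ℂ)*T - 1)/(2*(N:ℂ)*T) := by
      field_simp
    rw [hSdef, hden, hR, div_eq_div_iff h2T0 h2NT0, hNC, hTdef]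
    ring_nf
    linear_combination ((-2)*(b:ℂ) + 4*τ*(n:ℂ)^2) * hlamC
  set μC : ℂ := -1/((N:ℂ)*T) with hμ
  set τ' : ℂ := -(N:ℂ)/T with hτ'
  have hτ'im : 0 < τ'.im := by
    have h1 : τ'.im = (N:ℝ) * T.im / Complex.normSq T := by
      rw [hτ', Complex.div_im]
      simp only [Complex.neg_im, Complex.natCast_im, neg_zero, zero_mul, zero_div,
        Complex.neg_re, Complex.natCast_re]
      ring
    rw [h1]
    have hNR : (0:ℝ) < (N:ℝ) := by positivity
    positivity
  have hnormN : Complex.normSq ((N:ℕ):ℂ) = (N:ℝ)^2 := by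
    rw [Complex.normSq_apply]; simp; ring
  have hTNim : 0 < (T/(N:ℂ)).im := by
    have h1 : (T/(N:ℂ)).im = T.im / (N:ℝ) := by
      rw [Complex.div_im]
      simp only [Complex.natCast_im, Complex.natCast_re, mul_zero, zero_div, sub_zero, hnormN]
      field_simp
    rw [h1]
    positivity
  have hSim : 0 < S.im := by
    have e1 : ((b:ℂ)/(2*(N:ℂ))).im = 0 := by
      rw [Complex.div_im]
      simp
    have e2 : ((1:ℂ)/(2*(N:ℂ)*T)).im = -(2*(N:ℝ)*T.im / Complex.normSq (2*(N:ℂ)*T)) := by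
      rw [Complex.div_im]
      simp [Complex.mul_im, Complex.mul_re]
      all_goals ring
    have e3 : 0 < Complex.normSq (2*(N:ℂ)*T) := Complex.normSq_pos.mpr h2NT0
    have hNR : (0:ℝ) < (N:ℝ) := by positivity
    rw [hσ, Complex.sub_im, e1, e2]
    have h4 : 0 < 2*(N:ℝ)*T.im / Complex.normSq (2*(N:ℂ)*T) := by positivity
    linarith
  set χ : ℤ → ℂ := fun k => (jacobiSym k n : ℂ) with hχ
  have hχbound : ∀ k : ℤ, ‖χ k‖ ≤ 1 := by
    intro k
    rw [hχ]
    rcases jacobiSym.trichotomy k n with h | h | h <;> simp [h]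
  set f : ℤ → ℂ := fun k => χ k * Complex.exp (2 * (π:ℂ) * I * (k:ℂ)^2 * S) with hf
  have hterm : ∀ k : ℤ, Complex.exp (2 * (π:ℂ) * I * (k:ℂ)^2 * S) = jacobiTheta₂_term k 0 (2*S) := by
    intro k
    rw [jacobiTheta₂_term]
    congr 1
    ring
  have hsummable : Summable f := by
    have h1 : Summable (fun k : ℤ => jacobiTheta₂_term k 0 (2*S)) := by
      rw [summable_jacobiTheta₂_term_iff]
      have : (2*S).im = 2 * S.im := by
        simp [Complex.mul_im]
      rw [this]; linarith
    apply Summable.of_norm_bounded h1.norm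
    intro k
    rw [hf]
    simp only [norm_mul]
    rw [← hterm k]
    calc ‖χ k‖ * ‖Complex.exp (2 * (π:ℂ) * I * (k:ℂ)^2 * S)‖
        ≤ 1 * ‖Complex.exp (2 * (π:ℂ) * I * (k:ℂ)^2 * S)‖ :=
          mul_le_mul_of_nonneg_right (hχbound k) (norm_nonneg _)
      _ = ‖Complex.exp (2 * (π:ℂ) * I * (k:ℂ)^2 * S)‖ := one_mul _
  have lhs0 : thetaChi n S = ∑' k : ℤ, f k := by
    rw [thetaChi]
  rw [lhs0, tsum_int_residue hsummable N]
  set w : ℂ := 1 / (Complex.I * (N:ℂ)/T) ^ ((1:ℂ)/2) with hw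
  have inner_eval : ∀ r : ZMod N, ∑' j : ℤ, f ((r.val:ℤ) + N * j) =
      χ (r.val:ℤ) * Complex.exp ((π:ℂ) * I * (b:ℂ) * ((r.val:ℕ):ℂ)^2 / (N:ℂ)) * w *
        jacobiTheta₂ (((r.val:ℕ):ℂ)/(N:ℂ)) (T/(N:ℂ)) := by
    intro r
    set v : ℂ := ((r.val:ℕ):ℂ) with hv
    set zr : ℂ := v * (N:ℂ) * μC with hzr
    have E1 : ∀ j : ℤ, f ((r.val:ℤ) + N * j) =
        (χ (r.val:ℤ) * Complex.exp ((π:ℂ) * I * (b:ℂ) * v^2 / (N:ℂ)) *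
          Complex.exp ((π:ℂ) * I * v^2 * μC)) * jacobiTheta₂_term j zr τ' := by
      intro j
      rw [hf]
      simp only
      have hχeq : χ ((r.val:ℤ) + N * j) = χ (r.val:ℤ) := by
        rw [hχ]
        simp only
        congr 1
        apply jacobiSym.mod_left'
        have hNn : (N:ℤ) = (n:ℤ) * n := by rw [hNdef]; push_cast; ring
        rw [hNn, show (r.val:ℤ) + (n:ℤ)*n*j = (r.val:ℤ) + (n:ℤ)*(n*j) from by ring,
          Int.add_mul_emod_self_left]
      rw [hχeq]
      have hexp : Complex.exp (2 * (π:ℂ) * I * ((((r.val:ℤ) + N*j : ℤ)):ℂ)^2 * S) =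
          Complex.exp ((π:ℂ) * I * (b:ℂ) * v^2 / (N:ℂ)) *
            Complex.exp ((π:ℂ) * I * v^2 * μC) * jacobiTheta₂_term j zr τ' := by
        rw [jacobiTheta₂_term, ← Complex.exp_add, ← Complex.exp_add,
          Complex.exp_eq_exp_iff_exists_int]
        refine ⟨b * r.val * j + c * N * j^2, ?_⟩
        rw [hσ, hzr, hμ, hτ', hv]
        push_cast [hbc]
        field_simp
        ring
      rw [show ((((r.val:ℤ) + (N:ℤ)*j : ℤ)):ℂ) = ((r.val:ℕ):ℂ) + (N:ℂ)*(j:ℂ) from by push_cast; ring] at hexp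
      rw [show ((((r.val:ℤ) + (N:ℤ)*j : ℤ)):ℂ) = ((r.val:ℕ):ℂ) + (N:ℂ)*(j:ℂ) from by push_cast; ring]
      rw [hexp]
      ring
    rw [tsum_congr E1, tsum_mul_left, ← jacobiTheta₂]
    rw [jacobiTheta₂_functional_equation zr τ']
    have e1 : -1/τ' = T/(N:ℂ) := by
      rw [hτ']
      field_simp
    have e2 : zr/τ' = v/(N:ℂ) := by
      rw [hzr, hμ, hτ']
      field_simp
    have e3 : -(π:ℂ) * I * zr^2 / τ' = -((π:ℂ) * I * v^2 * μC) := by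
      rw [hzr, hμ, hτ']
      field_simp
    have e4 : -Complex.I * τ' = Complex.I * (N:ℂ)/T := by
      rw [hτ']
      field_simp
    rw [e1, e2, e3, e4, ← hw]
    rw [show Complex.exp (-((π:ℂ) * I * v^2 * μC)) = (Complex.exp ((π:ℂ) * I * v^2 * μC))⁻¹ from by
      rw [← Complex.exp_neg]]
    have hexp0 : Complex.exp ((π:ℂ) * I * v^2 * μC) ≠ 0 := Complex.exp_ne_zero _
    field_simp
  rw [Finset.sum_congr rfl (fun r _ => inner_eval r)]
  have expand : ∀ r : ZMod N,
      χ (r.val:ℤ) * Complex.exp ((π:ℂ) * I * (b:ℂ) * ((r.val:ℕ):ℂ)^2 / (N:ℂ)) * w *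
        jacobiTheta₂ (((r.val:ℕ):ℂ)/(N:ℂ)) (T/(N:ℂ)) =
      ∑' l : ℤ, χ (r.val:ℤ) * Complex.exp ((π:ℂ) * I * (b:ℂ) * ((r.val:ℕ):ℂ)^2 / (N:ℂ)) * w *
        jacobiTheta₂_term l (((r.val:ℕ):ℂ)/(N:ℂ)) (T/(N:ℂ)) := by
    intro r
    rw [jacobiTheta₂, ← tsum_mul_left]
  rw [Finset.sum_congr rfl (fun r _ => expand r)]
  have hsum_inner : ∀ r : ZMod N, Summable (fun l : ℤ =>
      χ (r.val:ℤ) * Complex.exp ((π:ℂ) * I * (b:ℂ) * ((r.val:ℕ):ℂ)^2 / (N:ℂ)) * w *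
        jacobiTheta₂_term l (((r.val:ℕ):ℂ)/(N:ℂ)) (T/(N:ℂ))) := by
    intro r
    apply Summable.mul_left
    exact (summable_jacobiTheta₂_term_iff _ _).mpr hTNim
  rw [← Summable.tsum_finsetSum (fun r _ => hsum_inner r)]
  have per_l : ∀ l : ℤ, ∑ r : ZMod N,
      χ (r.val:ℤ) * Complex.exp ((π:ℂ) * I * (b:ℂ) * ((r.val:ℕ):ℂ)^2 / (N:ℂ)) * w *
        jacobiTheta₂_term l (((r.val:ℕ):ℂ)/(N:ℂ)) (T/(N:ℂ)) =
      w * ((n:ℂ) * (jacobiSym b n : ℂ)) * (χ l * Complex.exp (2 * (π:ℂ) * I * (l:ℂ)^2 * τ)) := by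
    intro l
    have hterm_split : ∀ r : ZMod N,
        χ (r.val:ℤ) * Complex.exp ((π:ℂ) * I * (b:ℂ) * ((r.val:ℕ):ℂ)^2 / (N:ℂ)) * w *
          jacobiTheta₂_term l (((r.val:ℕ):ℂ)/(N:ℂ)) (T/(N:ℂ)) =
        ((jacobiSym ((r.val:ℤ)) n : ℂ) *
          Complex.exp ((π:ℂ) * I * ((b:ℂ) * ((r.val:ℕ):ℂ)^2 + 2 * (l:ℂ) * ((r.val:ℕ):ℂ)) / (N:ℂ)))
          * (w * Complex.exp ((π:ℂ) * I * (l:ℂ)^2 * T / (N:ℂ))) := by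
      intro r
      rw [jacobiTheta₂_term, hχ]
      simp only
      have comb : Complex.exp ((π:ℂ) * I * (b:ℂ) * ((r.val:ℕ):ℂ)^2 / (N:ℂ)) *
          Complex.exp (2 * (π:ℂ) * I * l * (((r.val:ℕ):ℂ)/(N:ℂ)) + (π:ℂ) * I * (l:ℂ)^2 * (T/(N:ℂ))) =
          Complex.exp ((π:ℂ) * I * ((b:ℂ) * ((r.val:ℕ):ℂ)^2 + 2 * (l:ℂ) * ((r.val:ℕ):ℂ)) / (N:ℂ)) *
          Complex.exp ((π:ℂ) * I * (l:ℂ)^2 * T / (N:ℂ)) := by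
        rw [← Complex.exp_add, ← Complex.exp_add]
        congr 1
        field_simp
        ring
      calc (jacobiSym ((r.val:ℤ)) n : ℂ) *
            Complex.exp ((π:ℂ) * I * (b:ℂ) * ((r.val:ℕ):ℂ)^2 / (N:ℂ)) * w *
            Complex.exp (2 * (π:ℂ) * I * l * (((r.val:ℕ):ℂ)/(N:ℂ)) + (π:ℂ) * I * (l:ℂ)^2 * (T/(N:ℂ)))
          = (jacobiSym ((r.val:ℤ)) n : ℂ) * w *
            (Complex.exp ((π:ℂ) * I * (b:ℂ) * ((r.val:ℕ):ℂ)^2 / (N:ℂ)) *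
             Complex.exp (2 * (π:ℂ) * I * l * (((r.val:ℕ):ℂ)/(N:ℂ)) + (π:ℂ) * I * (l:ℂ)^2 * (T/(N:ℂ)))) := by
            ring
        _ = (jacobiSym ((r.val:ℤ)) n : ℂ) * w *
            (Complex.exp ((π:ℂ) * I * ((b:ℂ) * ((r.val:ℕ):ℂ)^2 + 2 * (l:ℂ) * ((r.val:ℕ):ℂ)) / (N:ℂ)) *
             Complex.exp ((π:ℂ) * I * (l:ℂ)^2 * T / (N:ℂ))) := by rw [comb]
        _ = _ := by ring
    rw [Finset.sum_congr rfl (fun r _ => hterm_split r), ← Finset.sum_mul]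
    rw [Ssum n hn N hNdef b ⟨c, hc⟩ lam hlam l]
    have final_exp : Complex.exp ((π:ℂ) * I * (b:ℂ) * (l:ℂ)^2 / (N:ℂ)) *
        Complex.exp ((π:ℂ) * I * (l:ℂ)^2 * T / (N:ℂ)) = Complex.exp (2 * (π:ℂ) * I * (l:ℂ)^2 * τ) := by
      rw [← Complex.exp_add]
      congr 1
      rw [hTdef, hNC]
      field_simp
      ring
    rw [hχ]
    simp only
    calc Complex.exp ((π:ℂ) * I * (b:ℂ) * (l:ℂ)^2 / (N:ℂ)) * (n:ℂ) * (jacobiSym b n : ℂ) *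
          (jacobiSym l n : ℂ) * (w * Complex.exp ((π:ℂ) * I * (l:ℂ)^2 * T / (N:ℂ)))
        = w * ((n:ℂ) * (jacobiSym b n : ℂ)) * ((jacobiSym l n : ℂ) *
            (Complex.exp ((π:ℂ) * I * (b:ℂ) * (l:ℂ)^2 / (N:ℂ)) *
             Complex.exp ((π:ℂ) * I * (l:ℂ)^2 * T / (N:ℂ)))) := by ring
      _ = _ := by rw [final_exp]
  rw [tsum_congr per_l, tsum_mul_left]
  have hθ : thetaChi n τ = ∑' l : ℤ, χ l * Complex.exp (2 * (π:ℂ) * I * (l:ℂ)^2 * τ) := by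
    rw [thetaChi]
  rw [hθ]
  have scalar : w * (n:ℂ) = (1 - Complex.I) * (((n:ℂ)^2 * τ - (b:ℂ)/2) ^ ((1:ℂ)/2)) := by
    have h1 : (n:ℂ) / (Complex.I * (n : ℂ)^2/T) ^ (1/2 : ℂ) = (1 - Complex.I) * (T/2) ^ (1/2 : ℂ) :=
      scalar_identity hTim n hn
    have h2 : T/2 = (n:ℂ)^2 * τ - (b:ℂ)/2 := by rw [hTdef]; ring
    rw [hw, hNC, ← h2, ← h1]
    ring
  rw [← scalar]
  ring

/-- **Atkin–Lehner transformation of `θ_{χ_n}`**: with `σ(τ) = (2bτ−λ)/(4n²τ−2b)`,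
`θ_{χ_n}(σ(τ)) = ±(1−i)√(n²τ−b/2)·θ_{χ_n}(τ)`, the sign depending on `n mod 8`. -/
theorem thetaChi_atkin_lehner (n : ℕ) (hn : 0 < n) (hsf : Squarefree n)
    (hp : ∀ p : ℕ, p.Prime → p ∣ n → p % 4 = 1)
    (b : ℤ) (hb : Even b) (lam : ℤ) (hlam : b ^ 2 + 1 = lam * (n : ℤ) ^ 2)
    (τ : ℂ) (hτ : 0 < τ.im) :
    (n % 8 = 1 →
      thetaChi n ((2 * (b : ℂ) * τ - (lam : ℂ)) / (4 * (n : ℂ) ^ 2 * τ - 2 * (b : ℂ))) =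
        (1 - Complex.I) * (((n : ℂ) ^ 2 * τ - (b : ℂ) / 2) ^ ((1 : ℂ) / 2)) * thetaChi n τ) ∧
    (n % 8 = 5 →
      thetaChi n ((2 * (b : ℂ) * τ - (lam : ℂ)) / (4 * (n : ℂ) ^ 2 * τ - 2 * (b : ℂ))) =
        (Complex.I - 1) * (((n : ℂ) ^ 2 * τ - (b : ℂ) / 2) ^ ((1 : ℂ) / 2)) * thetaChi n τ) := by
  have key := thetaChi_key n hn b hb lam hlam τ hτ
  have hdvd : (n:ℤ) ∣ b^2 + 1 := by
    rw [hlam]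
    exact ⟨lam * n, by ring⟩
  have hval := jacobi_b_val n hn hsf hp b hdvd
  constructor
  · intro h8
    rcases hval with ⟨_, hj⟩ | ⟨h5, _⟩
    · rw [key, hj]
      push_cast
      ring
    · omega
  · intro h8
    rcases hval with ⟨h1, _⟩ | ⟨_, hj⟩
    · omega
    · rw [key, hj]
      push_cast
      ring
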